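/- arXiv:2405.04040 — 3 statements merged into one kernel-verified Lean document; each statement's English description precedes it below -/
import Mathlib

section
/- If f(z) = Σ_{n=0}^∞ a_n z^n is analytic on the unit disk with |f(z)| ≤ 1 for all |z| < 1, then Σ_{n=0}^∞ |a_n| r^n ≤ 1 for all 0 ≤ r ≤ 1/3. -/
/-!
The key estimate is F. Wiener's inequality `‖a n‖ ≤ 1 - ‖a 0‖ ^ 2` for `n ≠ 0`. Averaging `f` over
the rotations of `z` by the `n`-th roots of unity gives `h (z ^ n)`, where `h w = ∑ a (n k) w ^ k`
is again bounded by `1` on the disc; the Schwarz–Pick lemma at the origin, obtained from the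
Schwarz lemma applied to `h` followed by the disc automorphism moving `h 0` to `0`, bounds
`‖h' 0‖ = ‖a n‖` by `1 - ‖h 0‖ ^ 2 = 1 - ‖a 0‖ ^ 2`. Summing, for `r ≤ 1 / 3`,
`∑ ‖a n‖ r ^ n ≤ ‖a 0‖ + (1 - ‖a 0‖ ^ 2) r / (1 - r) ≤ ‖a 0‖ + (1 - ‖a 0‖ ^ 2) / 2 ≤ 1`.
-/

open Complex Metric Set Finset FormalMultilinearSeries ComplexConjugate
open scoped NNReal

theorem IsPrimitiveRoot.sum_pow_pow_eq {R : Type*} [CommRing R] [IsDomain R] {ζ : R} {n : ℕ}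
    (hζ : IsPrimitiveRoot ζ n) (m : ℕ) :
    ∑ j ∈ range n, (ζ ^ m) ^ j = if n ∣ m then (n : R) else 0 := by
  split_ifs with hdvd
  · simp [(hζ.pow_eq_one_iff_dvd m).mpr hdvd]
  · have hne : ζ ^ m - 1 ≠ 0 := sub_ne_zero.mpr fun h => hdvd ((hζ.pow_eq_one_iff_dvd m).mp h)
    refine (mul_eq_zero.mp ?_).resolve_right hne
    rw [geom_sum_mul, ← pow_mul, mul_comm, pow_mul, hζ.pow_eq_one, one_pow, sub_self]

theorem IsPrimitiveRoot.hasSum_average_rotations {𝕜 : Type*} [Field 𝕜] [CharZero 𝕜]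
    [TopologicalSpace 𝕜] [IsTopologicalRing 𝕜] {ζ : 𝕜} {n : ℕ} (hζ : IsPrimitiveRoot ζ n)
    (hn : n ≠ 0) {a : ℕ → 𝕜} {f : 𝕜 → 𝕜} {z : 𝕜}
    (h : ∀ j ∈ range n, HasSum (fun m => a m * (ζ ^ j * z) ^ m) (f (ζ ^ j * z))) :
    HasSum (fun k => a (n * k) * (z ^ n) ^ k) ((n : 𝕜)⁻¹ * ∑ j ∈ range n, f (ζ ^ j * z)) := by
  have hterm : ∀ m, (n : 𝕜)⁻¹ * ∑ j ∈ range n, a m * (ζ ^ j * z) ^ m =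
      if n ∣ m then a m * z ^ m else 0 := by
    intro m
    have : ∑ j ∈ range n, a m * (ζ ^ j * z) ^ m = a m * z ^ m * ∑ j ∈ range n, (ζ ^ m) ^ j := by
      rw [mul_sum]
      exact sum_congr rfl fun j _ => by ring
    rw [this, hζ.sum_pow_pow_eq]
    split_ifs
    · field_simp
    · simp
  have hsum := (hasSum_sum h).mul_left (n : 𝕜)⁻¹
  simp only [hterm] at hsum
  rw [← (mul_right_injective₀ hn).hasSum_iff fun m hm => if_neg fun ⟨k, hk⟩ => hm ⟨k, hk.symm⟩]
    at hsum
  simpa [Function.comp_def, pow_mul] using hsum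

theorem hasFPowerSeriesOnBall_ofScalars_of_hasSum {c : ℕ → ℂ} {F : ℂ → ℂ} {R : ℝ≥0}
    (hR : 0 < R) (h : ∀ z ∈ ball (0 : ℂ) R, HasSum (fun n => c n * z ^ n) (F z)) :
    HasFPowerSeriesOnBall F (ofScalars ℂ c) 0 R where
  r_le := by
    refine ENNReal.le_of_forall_nnreal_lt fun r hr =>
      (ofScalars ℂ c).le_radius_of_tendsto (l := 0) ?_
    have hr' : (r : ℂ) ∈ ball (0 : ℂ) R := by simpa using hr
    simpa [ofScalars_norm] using (h _ hr').summable.tendsto_atTop_zero.norm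
  r_pos := by simpa using hR
  hasSum := by
    intro y hy
    simpa [ofScalars_apply_eq, mul_comm] using h y (by simpa using hy)

noncomputable def blaschkeFactor (α w : ℂ) : ℂ := (w - α) / (1 - conj α * w)

theorem one_sub_conj_mul_ne_zero {α w : ℂ} (hα : ‖α‖ < 1) (hw : ‖w‖ ≤ 1) :
    1 - conj α * w ≠ 0 := by
  refine sub_ne_zero.mpr fun h => ?_
  have : ‖conj α * w‖ < 1 := by
    rw [norm_mul, RCLike.norm_conj]
    nlinarith [norm_nonneg α, norm_nonneg w]
  simp [← h] at this

theorem norm_blaschkeFactor_le_one {α w : ℂ} (hα : ‖α‖ < 1) (hw : ‖w‖ ≤ 1) :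
    ‖blaschkeFactor α w‖ ≤ 1 := by
  have key : normSq (1 - conj α * w) - normSq (w - α) = (1 - normSq α) * (1 - normSq w) := by
    simp only [normSq_apply, sub_re, sub_im, mul_re, mul_im, one_re, one_im, conj_re, conj_im]
    ring
  simp only [normSq_eq_norm_sq] at key
  rw [blaschkeFactor, norm_div, div_le_one (norm_pos_iff.mpr (one_sub_conj_mul_ne_zero hα hw))]
  refine (pow_le_pow_iff_left₀ (norm_nonneg _) (norm_nonneg _) two_ne_zero).mp ?_
  nlinarith [mul_nonneg (sub_nonneg.mpr (pow_le_one₀ (n := 2) (norm_nonneg α) hα.le))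
    (sub_nonneg.mpr (pow_le_one₀ (n := 2) (norm_nonneg w) hw))]

theorem hasDerivAt_blaschkeFactor {α w : ℂ} (hw : 1 - conj α * w ≠ 0) :
    HasDerivAt (blaschkeFactor α) ((1 - conj α * α) / (1 - conj α * w) ^ 2) w := by
  have := ((hasDerivAt_id' w).sub_const α).div
    (((hasDerivAt_id' w).const_mul (conj α)).const_sub 1) hw
  exact this.congr_deriv (by ring)

theorem norm_deriv_le_one_sub_sq_of_mapsTo_ball_of_norm_lt_one {h : ℂ → ℂ}
    (hd : DifferentiableOn ℂ h (ball 0 1)) (hmaps : MapsTo h (ball 0 1) (closedBall 0 1))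
    (h0 : ‖h 0‖ < 1) : ‖deriv h 0‖ ≤ 1 - ‖h 0‖ ^ 2 := by
  set α := h 0
  have hden : ∀ z ∈ ball (0 : ℂ) 1, 1 - conj α * h z ≠ 0 := fun z hz =>
    one_sub_conj_mul_ne_zero h0 (mem_closedBall_zero_iff.mp (hmaps hz))
  have hhd : ∀ z ∈ ball (0 : ℂ) 1, HasDerivAt h (deriv h z) z := fun z hz =>
    (hd.differentiableAt (isOpen_ball.mem_nhds hz)).hasDerivAt
  have hFd : DifferentiableOn ℂ (blaschkeFactor α ∘ h) (ball 0 1) := fun z hz =>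
    ((hasDerivAt_blaschkeFactor (hden z hz)).comp z (hhd z hz)).differentiableAt
      |>.differentiableWithinAt
  have hFmaps : MapsTo (blaschkeFactor α ∘ h) (ball 0 1)
      (closedBall ((blaschkeFactor α ∘ h) 0) 1) := fun z hz => by
    simpa [blaschkeFactor, α] using
      norm_blaschkeFactor_le_one h0 (mem_closedBall_zero_iff.mp (hmaps hz))
  have hschwarz := Complex.norm_deriv_le_one_of_mapsTo_ball hFd hFmaps one_pos
  rw [((hasDerivAt_blaschkeFactor (hden 0 (mem_ball_self one_pos))).comp 0
    (hhd 0 (mem_ball_self one_pos))).deriv] at hschwarz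
  have hpos : 0 < 1 - ‖α‖ ^ 2 := by nlinarith [norm_nonneg α]
  -- the derivative of `blaschkeFactor α` at `α` is `(1 - ‖α‖ ^ 2)⁻¹`
  rwa [conj_mul', ← ofReal_pow, ← ofReal_one, ← ofReal_sub, norm_mul, norm_div, norm_pow,
    norm_real, Real.norm_of_nonneg hpos.le, sq (1 - _), div_mul_cancel_right₀ hpos.ne',
    inv_mul_le_iff₀ hpos, mul_one] at hschwarz

theorem norm_deriv_le_one_sub_sq_of_mapsTo_ball {h : ℂ → ℂ}
    (hd : DifferentiableOn ℂ h (ball 0 1)) (hmaps : MapsTo h (ball 0 1) (closedBall 0 1)) :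
    ‖deriv h 0‖ ≤ 1 - ‖h 0‖ ^ 2 := by
  have h0 : (0 : ℂ) ∈ ball (0 : ℂ) 1 := mem_ball_self one_pos
  rcases (mem_closedBall_zero_iff.mp (hmaps h0)).lt_or_eq with hlt | heq
  · exact norm_deriv_le_one_sub_sq_of_mapsTo_ball_of_norm_lt_one hd hmaps hlt
  · -- `‖h‖` attains its maximum at the centre, so `h` is constant
    have hconst := Complex.eqOn_of_isPreconnected_of_isMaxOn_norm
      (convex_ball (0 : ℂ) 1).isPreconnected isOpen_ball hd h0
      fun z hz => by simpa [heq] using hmaps hz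
    rw [(hconst.eventuallyEq_of_mem (isOpen_ball.mem_nhds h0)).deriv_eq, heq]
    have : deriv (Function.const ℂ (h 0)) 0 = 0 := deriv_const 0 (h 0)
    simp [this]

theorem norm_coeff_le_one_sub_sq {f : ℂ → ℂ} {a : ℕ → ℂ}
    (hb : ∀ z ∈ ball (0 : ℂ) 1, ‖f z‖ ≤ 1)
    (ha : ∀ z ∈ ball (0 : ℂ) 1, HasSum (fun n => a n * z ^ n) (f z)) {n : ℕ} (hn : n ≠ 0) :
    ‖a n‖ ≤ 1 - ‖a 0‖ ^ 2 := by
  obtain ⟨ζ, hζ⟩ : ∃ ζ : ℂ, IsPrimitiveRoot ζ n := ⟨_, Complex.isPrimitiveRoot_exp n hn⟩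
  have hrot : ∀ (j : ℕ), ∀ z ∈ ball (0 : ℂ) 1, ζ ^ j * z ∈ ball (0 : ℂ) 1 := by
    simp [hζ.norm'_eq_one hn]
  -- `h (z ^ n)` is the average of `f` over the rotations of `z` by the `n`-th roots of unity
  obtain ⟨h, hh⟩ : ∃ h : ℂ → ℂ,
      ∀ w ∈ ball (0 : ℂ) 1, HasSum (fun k => a (n * k) * w ^ k) (h w) ∧ ‖h w‖ ≤ 1 := by
    refine ⟨fun w => ∑' k, a (n * k) * w ^ k, fun w hw => ?_⟩
    obtain ⟨z, rfl⟩ := IsAlgClosed.exists_pow_nat_eq w (Nat.pos_of_ne_zero hn)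
    have hz : z ∈ ball (0 : ℂ) 1 := by
      simpa [norm_pow, pow_lt_one_iff_of_nonneg (norm_nonneg z) hn] using hw
    have hs := hζ.hasSum_average_rotations hn fun j _ => ha _ (hrot j z hz)
    refine ⟨hs.summable.hasSum, ?_⟩
    show ‖∑' k, a (n * k) * (z ^ n) ^ k‖ ≤ 1
    rw [hs.tsum_eq, norm_mul, norm_inv, norm_natCast, inv_mul_le_iff₀ (by positivity), mul_one]
    simpa using norm_sum_le_of_le (range n) fun j _ => hb _ (hrot j z hz)
  have hps := hasFPowerSeriesOnBall_ofScalars_of_hasSum one_pos fun w hw => (hh w hw).1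
  have hd : DifferentiableOn ℂ h (ball 0 1) := by
    simpa only [eball_coe, NNReal.coe_one] using hps.differentiableOn
  have := norm_deriv_le_one_sub_sq_of_mapsTo_ball hd
    fun w hw => mem_closedBall_zero_iff.mpr (hh w hw).2
  simpa [hps.hasFPowerSeriesAt.deriv, ← hps.coeff_zero fun _ => 1, ofScalars_apply_eq] using this

theorem tsum_mul_pow_le_one_of_le_one_sub_sq {c : ℕ → ℝ} {r : ℝ} (hc : ∀ n, 0 ≤ c n)
    (hc₀ : c 0 ≤ 1) (hcn : ∀ n, n ≠ 0 → c n ≤ 1 - c 0 ^ 2) (hr₀ : 0 ≤ r) (hr : r ≤ 1 / 3) :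
    ∑' n, c n * r ^ n ≤ 1 := by
  have hr₁ : r < 1 := by linarith
  have hc_le : ∀ n, c n ≤ 1 := fun n => by
    rcases eq_or_ne n 0 with rfl | hn
    · exact hc₀
    · nlinarith [hcn n hn, sq_nonneg (c 0)]
  have hgeom := summable_geometric_of_lt_one hr₀ hr₁
  have hsum : Summable fun n => c n * r ^ n :=
    hgeom.of_nonneg_of_le (fun n => mul_nonneg (hc n) (pow_nonneg hr₀ n))
      fun n => mul_le_of_le_one_left (by positivity) (hc_le n)
  calc ∑' n, c n * r ^ n = c 0 + ∑' n, c (n + 1) * r ^ (n + 1) := by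
        simpa using hsum.tsum_eq_zero_add
    _ ≤ c 0 + ∑' n, (1 - c 0 ^ 2) * r * r ^ n := by
        refine add_le_add le_rfl (((summable_nat_add_iff 1).mpr hsum).tsum_le_tsum (fun n => ?_)
          (hgeom.mul_left _))
        rw [pow_succ', ← mul_assoc]
        gcongr
        exact hcn _ n.succ_ne_zero
    _ = c 0 + (1 - c 0 ^ 2) * r / (1 - r) := by
        rw [tsum_mul_left, tsum_geometric_of_lt_one hr₀ hr₁, div_eq_mul_inv]
    _ ≤ 1 := by
        have : (1 - c 0 ^ 2) * r / (1 - r) ≤ (1 - c 0 ^ 2) / 2 := by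
          rw [div_le_div_iff₀ (by linarith) two_pos]
          nlinarith [mul_nonneg (sub_nonneg.mpr (pow_le_one₀ (n := 2) (hc 0) hc₀))
            (by linarith : 0 ≤ 1 - 3 * r)]
        nlinarith [sq_nonneg (1 - c 0)]

theorem bohr_classical_general (f : ℂ → ℂ) (a : ℕ → ℂ)
    (hb : ∀ z ∈ Metric.ball (0 : ℂ) 1, ‖f z‖ ≤ 1)
    (ha : ∀ z ∈ Metric.ball (0 : ℂ) 1, HasSum (fun n => a n * z ^ n) (f z)) :
    ∀ r : ℝ, 0 ≤ r → r ≤ 1 / 3 → ∑' n : ℕ, ‖a n‖ * r ^ n ≤ 1 := by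
  intro r hr₀ hr
  have h₀ : (0 : ℂ) ∈ ball (0 : ℂ) 1 := mem_ball_self one_pos
  have hf₀ : f 0 = a 0 := (ha 0 h₀).unique <| by
    simpa using hasSum_single (f := fun n => a n * 0 ^ n) 0 fun n hn => by simp [hn]
  exact tsum_mul_pow_le_one_of_le_one_sub_sq (fun n => norm_nonneg _) (hf₀ ▸ hb 0 h₀)
    (fun n hn => norm_coeff_le_one_sub_sq hb ha hn) hr₀ hr

theorem bohr_classical (f : ℂ → ℂ) (a : ℕ → ℂ)
    (hf : AnalyticOn ℂ f (Metric.ball (0 : ℂ) 1))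
    (hb : ∀ z ∈ Metric.ball (0 : ℂ) 1, ‖f z‖ ≤ 1)
    (ha : ∀ z ∈ Metric.ball (0 : ℂ) 1, HasSum (fun n => a n * z ^ n) (f z)) :
    ∀ r : ℝ, 0 ≤ r → r ≤ 1 / 3 → ∑' n : ℕ, ‖a n‖ * r ^ n ≤ 1 :=
  bohr_classical_general f a hb ha
end

section
/- For 0 ≤ γ < 1 and any 0 ≤ x ≤ 1 and 0 ≤ r ≤ (1+γ)/(3+γ), the function Ψ(x) = x/(1-r) + (1-x²)r/((1+γ)(1-r)²) satisfies Ψ(x) ≤ 1/(1-r). -/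
/-!
Writing `c = 1 + γ`, the gap `1/(1-r) - Ψ(x)` factors as
`(1 - x) (c (1 - r) - (1 + x) r) / (c (1 - r)²)`. For `x ≤ 1` and `r ≥ 0` the second factor is at
least `c (1 - r) - 2 r = (1 + γ) - (3 + γ) r`, which is nonnegative exactly when
`r ≤ (1 + γ)/(3 + γ)`.
-/

/-- The paper's `Ψ(x)`, with `c` standing for `1 + γ`. -/
noncomputable def psi (c r x : ℝ) : ℝ :=
  x / (1 - r) + (1 - x ^ 2) * r / (c * (1 - r) ^ 2)

lemma one_div_sub_psi {c r : ℝ} (x : ℝ) (hc : c ≠ 0) (hr : r ≠ 1) :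
    1 / (1 - r) - psi c r x = (1 - x) * (c * (1 - r) - (1 + x) * r) / (c * (1 - r) ^ 2) := by
  have hr' : 1 - r ≠ 0 := sub_ne_zero.2 (Ne.symm hr)
  unfold psi
  field_simp
  ring

lemma psi_le_one_div {c r x : ℝ} (hc : 0 < c) (hr : r ≠ 1) (hx : x ≤ 1)
    (h : (1 + x) * r ≤ c * (1 - r)) : psi c r x ≤ 1 / (1 - r) := by
  rw [← sub_nonneg, one_div_sub_psi x hc.ne' hr]
  have hr' : 1 - r ≠ 0 := sub_ne_zero.2 (Ne.symm hr)
  exact div_nonneg (mul_nonneg (sub_nonneg.2 hx) (sub_nonneg.2 h)) (by positivity)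

theorem psi_le_general (γ : ℝ) (hγ : 0 ≤ γ) (x : ℝ) (hx1 : x ≤ 1)
    (r : ℝ) (hr0 : 0 ≤ r) (hr : r ≤ (1 + γ) / (3 + γ)) :
    x / (1 - r) + (1 - x ^ 2) * r / ((1 + γ) * (1 - r) ^ 2) ≤ 1 / (1 - r) := by
  have hr' : r * (3 + γ) ≤ 1 + γ := (le_div_iff₀ (by linarith)).1 hr
  have hr1 : r < 1 := by nlinarith
  have hgap : (1 + x) * r ≤ (1 + γ) * (1 - r) := by nlinarith
  exact psi_le_one_div (by linarith) hr1.ne hx1 hgap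

theorem psi_le (γ : ℝ) (hγ : 0 ≤ γ) (hγ1 : γ < 1) (x : ℝ) (hx0 : 0 ≤ x) (hx1 : x ≤ 1)
    (r : ℝ) (hr0 : 0 ≤ r) (hr : r ≤ (1 + γ) / (3 + γ)) :
    x / (1 - r) + (1 - x ^ 2) * r / ((1 + γ) * (1 - r) ^ 2) ≤ 1 / (1 - r) :=
  psi_le_general γ hγ x hx1 r hr0 hr
end

section
/- For 0 ≤ γ < 1, if f is analytic on Ω_γ with |f| ≤ 1 and Taylor coefficients a_n at 0, then for all 0 < r < 1 the discrete Laplace transform majorant satisfies Σ_{n=0}^∞ (Σ_{k=0}^n |a_k|/(n+1)^{k+1}) r^n ≤ (1/r)·ln(1/(1-r)). -/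
/-!
On the unit disc `‖f‖ ≤ 1`. Choosing `v` with `‖v‖ = 1` and `v a₀ = ‖a₀‖`, the function
`v f + conj (v f) - 2 = 2 (Re (v f) - 1)` is real and nonpositive on each circle `|z| = ρ`; its
`k`-th Fourier coefficient is `v aₖ ρᵏ` (the negative modes of `f` vanish), and is bounded by its
mean `2 (1 - ‖a₀‖)`. Hence `‖aₖ‖ ≤ 2 (1 - ‖a₀‖)` for `k ≥ 1`. Since `∑_{k=1}^n (n+1)^{-k} ≤ 1/2`,
the `n`-th coefficient of the majorant is at most `1/(n+1)`, and `∑ rⁿ/(n+1) = (1/r) log (1/(1-r))`.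
-/

open Complex intervalIntegral Metric Filter Topology
open scoped Real ComplexConjugate

theorem integral_exp_int_mul_mul_I (m : ℤ) :
    ∫ θ in (0 : ℝ)..2 * π, exp (m * θ * I) = if m = 0 then (2 * π : ℂ) else 0 := by
  split_ifs with hm
  · simp [hm]
  have hmI : (m : ℂ) * I ≠ 0 := by simp [hm]
  simp only [mul_right_comm _ _ I]
  rw [integral_exp_mul_complex hmI, ofReal_zero, mul_zero, exp_zero,
    show (m : ℂ) * I * ↑(2 * π) = m * (2 * π * I) by push_cast; ring, exp_int_mul_two_pi_mul_I,
    sub_self, zero_div]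

theorem norm_exp_int_mul_mul_I (m : ℤ) (θ : ℝ) : ‖exp (m * θ * I)‖ = 1 := by
  simpa using norm_exp_ofReal_mul_I (m * θ)

section CircleFourier

variable {a : ℕ → ℂ} {ρ : ℝ} {g : ℝ → ℂ}

theorem continuous_of_hasSum_circleMap (hs : Summable fun n => ‖a n * (ρ : ℂ) ^ n‖)
    (hg : ∀ θ, HasSum (fun n => a n * circleMap 0 ρ θ ^ n) (g θ)) : Continuous g := by
  rw [show g = fun θ => ∑' n, a n * circleMap 0 ρ θ ^ n from funext fun θ => (hg θ).tsum_eq.symm]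
  exact continuous_tsum (fun n => by fun_prop) hs fun n θ => by simp [norm_circleMap_zero]

theorem hasSum_integral_mul_exp_of_hasSum_circleMap (hs : Summable fun n => ‖a n * (ρ : ℂ) ^ n‖)
    (hg : ∀ θ, HasSum (fun n => a n * circleMap 0 ρ θ ^ n) (g θ)) (m : ℤ) :
    HasSum (fun n : ℕ => if (n : ℤ) + m = 0 then 2 * π * (a n * ρ ^ n) else 0)
      (∫ θ in (0 : ℝ)..2 * π, g θ * exp (m * θ * I)) := by
  let F : ℕ → C(ℝ, ℂ) := fun n =>
    ⟨fun θ => a n * circleMap 0 ρ θ ^ n * exp (m * θ * I), by fun_prop⟩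
  have hF : ∀ n θ, F n θ = a n * ρ ^ n * exp (((n + m : ℤ) : ℂ) * θ * I) := fun n θ => by
    simp only [F, ContinuousMap.coe_mk, circleMap_zero, mul_pow, ← exp_nat_mul]
    push_cast
    rw [show ((n : ℂ) + m) * θ * I = n * (θ * I) + m * θ * I by ring, exp_add]
    ring
  have hnorm : Summable fun n =>
      ‖(F n).restrict (⟨Set.uIcc 0 (2 * π), isCompact_uIcc⟩ : TopologicalSpace.Compacts ℝ)‖ := by
    refine hs.of_nonneg_of_le (fun n => norm_nonneg _) fun n => ?_
    refine (ContinuousMap.norm_le _ (norm_nonneg _)).2 fun θ => ?_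
    rw [ContinuousMap.restrict_apply, hF, norm_mul, norm_exp_int_mul_mul_I, mul_one]
  have htsum : ∀ θ, ∑' n, F n θ = g θ * exp (m * θ * I) := fun θ =>
    ((hg θ).mul_right _).tsum_eq
  have hsum := hasSum_intervalIntegral_of_summable_norm hnorm
  rw [integral_congr fun θ _ => htsum θ] at hsum
  have hint : ∀ n, ∫ θ in (0 : ℝ)..2 * π, F n θ =
      if (n : ℤ) + m = 0 then 2 * π * (a n * ρ ^ n) else 0 := fun n => by
    rw [integral_congr fun θ _ => hF n θ, integral_const_mul, integral_exp_int_mul_mul_I]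
    split_ifs
    · ring
    · rw [mul_zero]
  simpa only [hint] using hsum

theorem integral_mul_exp_neg_of_hasSum_circleMap (hs : Summable fun n => ‖a n * (ρ : ℂ) ^ n‖)
    (hg : ∀ θ, HasSum (fun n => a n * circleMap 0 ρ θ ^ n) (g θ)) (k : ℕ) :
    ∫ θ in (0 : ℝ)..2 * π, g θ * exp (-k * θ * I) = 2 * π * (a k * ρ ^ k) := by
  have h := hasSum_integral_mul_exp_of_hasSum_circleMap hs hg (-k)
  push_cast at h
  rw [← (hasSum_single k fun n hn => if_neg (by omega)).unique h, if_pos (by ring)]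

theorem integral_mul_exp_of_hasSum_circleMap (hs : Summable fun n => ‖a n * (ρ : ℂ) ^ n‖)
    (hg : ∀ θ, HasSum (fun n => a n * circleMap 0 ρ θ ^ n) (g θ)) {k : ℕ} (hk : k ≠ 0) :
    ∫ θ in (0 : ℝ)..2 * π, g θ * exp (k * θ * I) = 0 := by
  have h := hasSum_integral_mul_exp_of_hasSum_circleMap hs hg k
  push_cast at h
  rw [← (hasSum_single 0 fun n _ => if_neg (by omega)).unique h, if_neg (by omega)]

end CircleFourier

theorem norm_integral_mul_exp_add_conj_le {h : ℝ → ℂ} (hc : Continuous h) (hh : ∀ θ, ‖h θ‖ ≤ 1)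
    {m : ℤ} (hm : m ≠ 0) :
    ‖(∫ θ in (0 : ℝ)..2 * π, h θ * exp (m * θ * I)) +
        conj (∫ θ in (0 : ℝ)..2 * π, h θ * exp (-m * θ * I))‖ ≤
      2 * (2 * π - (∫ θ in (0 : ℝ)..2 * π, h θ).re) := by
  have hconj : conj (∫ θ in (0 : ℝ)..2 * π, h θ * exp (-m * θ * I)) =
      ∫ θ in (0 : ℝ)..2 * π, conj (h θ) * exp (m * θ * I) := by
    refine (conjLIE.toLinearIsometry.intervalIntegral_comp_comm _).symm.trans ?_
    congr with θ
    simp [← exp_conj]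
  have hzero : ∫ θ in (0 : ℝ)..2 * π, 2 * exp (m * θ * I) = 0 := by
    rw [integral_const_mul, integral_exp_int_mul_mul_I, if_neg hm, mul_zero]
  have hsplit : (∫ θ in (0 : ℝ)..2 * π, h θ * exp (m * θ * I)) +
        ∫ θ in (0 : ℝ)..2 * π, conj (h θ) * exp (m * θ * I) =
      ∫ θ in (0 : ℝ)..2 * π, (h θ + conj (h θ) - 2) * exp (m * θ * I) := by
    rw [← sub_zero (_ + _), ← hzero, ← integral_add, ← integral_sub]
    · congr with θ
      ring
    all_goals exact Continuous.intervalIntegrable (by fun_prop) _ _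
  have hnorm : ∀ θ, ‖(h θ + conj (h θ) - 2) * exp (m * θ * I)‖ = 2 - 2 * (h θ).re := fun θ => by
    have hre : (h θ).re ≤ 1 := (re_le_norm _).trans (hh θ)
    rw [norm_mul, norm_exp_int_mul_mul_I, mul_one, add_conj,
      show ((2 * (h θ).re : ℝ) : ℂ) - 2 = ((2 * (h θ).re - 2 : ℝ) : ℂ) by push_cast; ring,
      norm_real, Real.norm_eq_abs, abs_of_nonpos (by linarith)]
    ring
  have hre : ∫ θ in (0 : ℝ)..2 * π, (h θ).re = (∫ θ in (0 : ℝ)..2 * π, h θ).re :=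
    reCLM.intervalIntegral_comp_comm (hc.intervalIntegrable _ _)
  rw [hconj, hsplit]
  calc _ ≤ ∫ θ in (0 : ℝ)..2 * π, ‖(h θ + conj (h θ) - 2) * exp (m * θ * I)‖ :=
        norm_integral_le_integral_norm (by positivity)
    _ = ∫ θ in (0 : ℝ)..2 * π, (2 - 2 * (h θ).re) := integral_congr fun θ _ => hnorm θ
    _ = 2 * (2 * π - (∫ θ in (0 : ℝ)..2 * π, h θ).re) := by
      rw [integral_sub intervalIntegrable_const
        ((show Continuous fun θ => 2 * (h θ).re by fun_prop).intervalIntegrable _ _),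
        integral_const_mul, hre, integral_const, smul_eq_mul, sub_zero]
      ring

theorem exists_norm_eq_one_mul_eq_norm (z : ℂ) : ∃ v : ℂ, ‖v‖ = 1 ∧ v * z = ‖z‖ := by
  refine ⟨exp (↑(-arg z) * I), norm_exp_ofReal_mul_I _, ?_⟩
  calc exp (↑(-arg z) * I) * z = exp (↑(-arg z) * I) * (‖z‖ * exp (arg z * I)) := by
        rw [norm_mul_exp_arg_mul_I]
    _ = ‖z‖ := by
        rw [mul_left_comm, ← exp_add, ofReal_neg, neg_mul, neg_add_cancel, exp_zero, mul_one]

theorem norm_coeff_mul_pow_le_of_hasSum_circleMap {a : ℕ → ℂ} {ρ : ℝ} {g : ℝ → ℂ} (hρ : 0 ≤ ρ)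
    (hs : Summable fun n => ‖a n * (ρ : ℂ) ^ n‖)
    (hg : ∀ θ, HasSum (fun n => a n * circleMap 0 ρ θ ^ n) (g θ)) (hg1 : ∀ θ, ‖g θ‖ ≤ 1)
    {k : ℕ} (hk : k ≠ 0) : ‖a k‖ * ρ ^ k ≤ 2 * (1 - ‖a 0‖) := by
  obtain ⟨v, hv, hva⟩ := exists_norm_eq_one_mul_eq_norm (a 0)
  have key := norm_integral_mul_exp_add_conj_le (h := fun θ => v * g θ)
    (continuous_const.mul (continuous_of_hasSum_circleMap hs hg))
    (fun θ => by rw [norm_mul, hv, one_mul]; exact hg1 θ) (m := -k) (by omega)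
  have h0 : ∫ θ in (0 : ℝ)..2 * π, g θ = 2 * π * a 0 := by
    simpa using integral_mul_exp_neg_of_hasSum_circleMap hs hg 0
  simp only [mul_assoc v, integral_const_mul, Int.cast_neg, Int.cast_natCast, neg_neg] at key
  rw [integral_mul_exp_neg_of_hasSum_circleMap hs hg, integral_mul_exp_of_hasSum_circleMap hs hg hk,
    h0, mul_zero, map_zero, add_zero] at key
  have hlhs : ‖v * (2 * π * (a k * ρ ^ k))‖ = 2 * π * (‖a k‖ * ρ ^ k) := by
    simp [hv, abs_of_nonneg hρ, Real.pi_nonneg]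
  have hrhs : (v * (2 * π * a 0)).re = 2 * π * ‖a 0‖ := by
    rw [mul_left_comm, hva]
    simp
  rw [hlhs, hrhs] at key
  nlinarith [Real.pi_pos]

theorem norm_coeff_le_two_mul_one_sub_norm_coeff_zero {f : ℂ → ℂ} {a : ℕ → ℂ}
    (ha : ∀ z ∈ ball (0 : ℂ) 1, HasSum (fun n => a n * z ^ n) (f z))
    (hf : ∀ z ∈ ball (0 : ℂ) 1, ‖f z‖ ≤ 1) {k : ℕ} (hk : k ≠ 0) :
    ‖a k‖ ≤ 2 * (1 - ‖a 0‖) := by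
  have hρ : ∀ ρ ∈ Set.Ioo (0 : ℝ) 1, ‖a k‖ * ρ ^ k ≤ 2 * (1 - ‖a 0‖) := fun ρ ⟨hρ0, hρ1⟩ => by
    have hmem : ∀ θ, circleMap 0 ρ θ ∈ ball (0 : ℂ) 1 := fun θ => by
      simpa [norm_circleMap_zero, abs_of_pos hρ0] using hρ1
    have hρmem : (ρ : ℂ) ∈ ball (0 : ℂ) 1 := by simpa [abs_of_pos hρ0] using hρ1
    exact norm_coeff_mul_pow_le_of_hasSum_circleMap hρ0.le
      (summable_norm_iff.2 (ha _ hρmem).summable) (fun θ => ha _ (hmem θ))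
      (fun θ => hf _ (hmem θ)) hk
  have hlim : Tendsto (fun ρ : ℝ => ‖a k‖ * ρ ^ k) (𝓝[<] 1) (𝓝 ‖a k‖) := by
    refine ((by fun_prop : Continuous fun ρ : ℝ => ‖a k‖ * ρ ^ k).tendsto' 1 _ ?_).mono_left
      nhdsWithin_le_nhds
    rw [one_pow, mul_one]
  exact le_of_tendsto hlim (eventually_of_mem (Ioo_mem_nhdsLT zero_lt_one) hρ)

theorem sum_range_one_div_succ_pow_succ_le_half (n : ℕ) :
    ∑ i ∈ Finset.range n, (1 / (n + 1 : ℝ)) ^ (i + 1) ≤ 1 / 2 := by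
  rcases n with _ | _ | n
  · simp
  · norm_num
  set q : ℝ := 1 / (↑(n + 2) + 1)
  have hq0 : 0 < q := by positivity
  have hq3 : q ≤ 1 / 3 := by
    rw [div_le_div_iff₀ (by positivity) (by norm_num)]
    push_cast
    linarith
  have hgeom := geom_sum_Ico_le_of_lt_one (m := 0) (n := n + 2) hq0.le (by linarith)
  rw [← Finset.range_eq_Ico, pow_zero] at hgeom
  simp_rw [pow_succ, ← Finset.sum_mul]
  calc (∑ i ∈ Finset.range (n + 2), q ^ i) * q ≤ 1 / (1 - q) * q :=
        mul_le_mul_of_nonneg_right hgeom hq0.le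
    _ ≤ 1 / 2 := by
        rw [one_div_mul_eq_div, div_le_iff₀ (by linarith)]
        linarith

theorem sum_div_succ_pow_succ_le_one_div {c : ℕ → ℝ} (hc : ∀ k, 0 ≤ c k)
    (hck : ∀ k, k ≠ 0 → c k ≤ 2 * (1 - c 0)) (n : ℕ) :
    ∑ k ∈ Finset.range (n + 1), c k / (n + 1 : ℝ) ^ (k + 1) ≤ 1 / (n + 1) := by
  have hc0 : 0 ≤ 1 - c 0 := by linarith [hc 1, hck 1 one_ne_zero]
  set q : ℝ := 1 / (n + 1)
  have hpow : ∀ k, c k / (n + 1 : ℝ) ^ (k + 1) = c k * q ^ (k + 1) := fun k => by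
    rw [one_div_pow, mul_one_div]
  calc ∑ k ∈ Finset.range (n + 1), c k / (n + 1 : ℝ) ^ (k + 1)
      = c 0 * q + ∑ i ∈ Finset.range n, c (i + 1) * q * q ^ (i + 1) := by
        rw [Finset.sum_range_succ', add_comm]
        simp only [hpow]
        congr 1
        · ring
        · exact Finset.sum_congr rfl fun i _ => by ring
    _ ≤ c 0 * q + ∑ i ∈ Finset.range n, 2 * (1 - c 0) * q * q ^ (i + 1) := by
        gcongr with i
        exact hck _ i.succ_ne_zero
    _ = c 0 * q + 2 * (1 - c 0) * q * ∑ i ∈ Finset.range n, q ^ (i + 1) := by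
        rw [Finset.mul_sum]
    _ ≤ c 0 * q + 2 * (1 - c 0) * q * (1 / 2) := by
        gcongr
        exact sum_range_one_div_succ_pow_succ_le_half n
    _ = q := by ring

theorem hasSum_one_div_succ_mul_pow {r : ℝ} (hr0 : r ≠ 0) (hr1 : |r| < 1) :
    HasSum (fun n : ℕ => 1 / (n + 1 : ℝ) * r ^ n) (1 / r * Real.log (1 / (1 - r))) := by
  have h := (Real.hasSum_pow_div_log_of_abs_lt_one hr1).mul_left (1 / r)
  rw [one_div (1 - r), Real.log_inv]
  have hterm : (fun n : ℕ => 1 / r * (r ^ (n + 1) / (n + 1))) =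
      fun n : ℕ => 1 / (n + 1 : ℝ) * r ^ n :=
    funext fun n : ℕ => by field_simp; ring
  rwa [hterm] at h

theorem ball_zero_one_subset_setOf_norm_add_div_lt {γ : ℝ} (hγ : 0 ≤ γ) (hγ1 : γ < 1) :
    ball (0 : ℂ) 1 ⊆ {z : ℂ | ‖z + γ / (1 - γ)‖ < 1 / (1 - γ)} := by
  intro z hz
  have h1γ : 0 < 1 - γ := sub_pos.2 hγ1
  have hc : ‖(γ : ℂ) / (1 - γ)‖ = γ / (1 - γ) := by
    rw [← ofReal_one, ← ofReal_sub, ← ofReal_div, norm_real, Real.norm_of_nonneg (by positivity)]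
  calc ‖z + γ / (1 - γ)‖ ≤ ‖z‖ + γ / (1 - γ) := (norm_add_le _ _).trans_eq (by rw [hc])
    _ < 1 + γ / (1 - γ) := by gcongr; simpa using hz
    _ = 1 / (1 - γ) := by field_simp; ring

theorem bohr_laplace_omega_gamma_general (γ : ℝ) (hγ : 0 ≤ γ) (hγ1 : γ < 1)
    (f : ℂ → ℂ) (a : ℕ → ℂ)
    (hb : ∀ z ∈ {z : ℂ | ‖z + γ / (1 - γ)‖ < 1 / (1 - γ)}, ‖f z‖ ≤ 1)
    (ha : ∀ z ∈ Metric.ball (0 : ℂ) 1, HasSum (fun n => a n * z ^ n) (f z)) :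
    ∀ r : ℝ, 0 < r → r < 1 →
      ∑' n : ℕ, (∑ k ∈ Finset.range (n + 1), ‖a k‖ / (n + 1 : ℝ) ^ (k + 1)) * r ^ n ≤
        (1 / r) * Real.log (1 / (1 - r)) := by
  intro r hr0 hr1
  have hf : ∀ z ∈ ball (0 : ℂ) 1, ‖f z‖ ≤ 1 := fun z hz =>
    hb z (ball_zero_one_subset_setOf_norm_add_div_lt hγ hγ1 hz)
  have hterm : ∀ n : ℕ, (∑ k ∈ Finset.range (n + 1), ‖a k‖ / (n + 1 : ℝ) ^ (k + 1)) * r ^ n ≤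
      1 / (n + 1 : ℝ) * r ^ n := fun n =>
    mul_le_mul_of_nonneg_right (sum_div_succ_pow_succ_le_one_div (fun k => norm_nonneg (a k))
      (fun k hk => norm_coeff_le_two_mul_one_sub_norm_coeff_zero ha hf hk) n) (by positivity)
  have hmaj := hasSum_one_div_succ_mul_pow hr0.ne' (by rwa [abs_of_pos hr0])
  have hnonneg : ∀ n : ℕ,
      0 ≤ (∑ k ∈ Finset.range (n + 1), ‖a k‖ / (n + 1 : ℝ) ^ (k + 1)) * r ^ n := fun n => by
    positivity
  exact hmaj.tsum_eq ▸
    (hmaj.summable.of_nonneg_of_le hnonneg hterm).tsum_le_tsum hterm hmaj.summable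

theorem bohr_laplace_omega_gamma (γ : ℝ) (hγ : 0 ≤ γ) (hγ1 : γ < 1)
    (f : ℂ → ℂ) (a : ℕ → ℂ)
    (hf : AnalyticOn ℂ f {z : ℂ | ‖z + γ / (1 - γ)‖ < 1 / (1 - γ)})
    (hb : ∀ z ∈ {z : ℂ | ‖z + γ / (1 - γ)‖ < 1 / (1 - γ)}, ‖f z‖ ≤ 1)
    (ha : ∀ z ∈ Metric.ball (0 : ℂ) 1, HasSum (fun n => a n * z ^ n) (f z)) :
    ∀ r : ℝ, 0 < r → r < 1 →
      ∑' n : ℕ, (∑ k ∈ Finset.range (n + 1), ‖a k‖ / (n + 1 : ℝ) ^ (k + 1)) * r ^ n ≤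
        (1 / r) * Real.log (1 / (1 - r)) :=
  bohr_laplace_omega_gamma_general γ hγ hγ1 f a hb ha
end
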